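/- For every ε ∈ (0,1) and every k₂ > 0 with k₂(ε+2) − ε > 0, the function f₁(k₂) = k₂²(k₂+1)ε/(k₂(ε+2) − ε) satisfies f₁(k₂) ≥ ε²(1−ε)²(1+ε−ε²)/(1+ε) = ε²/f(ε). -/

import Mathlib

/-!
Proof idea: by AM-GM, `4ε (k(ε+2) - ε) ≤ (k(ε+2))²`, so dropping the factor `k + 1 ≥ 1` gives
`f₁(k) ≥ 4ε²/(ε+2)²`. With `u = ε + ε²` one has `(1-ε)(ε+2) = 2 - u` and `1 + ε - ε² ≤ 1 + u`, and
`(2-u)²(1+u) = 4 - u²(3-u) ≤ 4`; hence `ε²(1-ε)²(1+ε-ε²) ≤ 4ε²/(ε+2)²`, and dividing by `1 + ε ≥ 1`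
only makes the left side smaller.
-/

open MeasureTheory ProbabilityTheory Real

noncomputable def uniformIcc (a b : ℝ) : Measure ℝ :=
  (ENNReal.ofReal (b - a))⁻¹ • (MeasureTheory.volume.restrict (Set.Icc a b))

/-- The median of `2*n+1` real values: their `(n+1)`-st smallest value. -/
noncomputable def medianOf {n : ℕ} (v : Fin (2 * n + 1) → ℝ) : ℝ :=
  (Multiset.sort (↑(List.ofFn v)) (· ≤ ·)).get ⟨n, by simp <;> omega⟩

/-- The nuisance factor `f(ε) = (1+ε)/((1-ε)² (1+ε-ε²))`. -/
noncomputable def nuisance (ε : ℝ) : ℝ := (1 + ε) / ((1 - ε) ^ 2 * (1 + ε - ε ^ 2))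

lemma sq_div_nuisance (ε : ℝ) :
    ε ^ 2 / nuisance ε = ε ^ 2 * (1 - ε) ^ 2 * (1 + ε - ε ^ 2) / (1 + ε) := by
  rw [nuisance, div_div_eq_mul_div]
  ring

lemma four_mul_div_sq_le_sq_div {k b c : ℝ} (hc : 0 < c) (hd : 0 < k * c - b) :
    4 * b / c ^ 2 ≤ k ^ 2 / (k * c - b) := by
  rw [div_le_div_iff₀ (by positivity) hd]
  calc 4 * b * (k * c - b) ≤ (b + (k * c - b)) ^ 2 := four_mul_le_sq_add b (k * c - b)
    _ = k ^ 2 * c ^ 2 := by ring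

lemma sq_two_sub_mul_one_add_le_four {u : ℝ} (hu : u ≤ 3) : (2 - u) ^ 2 * (1 + u) ≤ 4 := by
  have hdefect : 0 ≤ u ^ 2 * (3 - u) := mul_nonneg (sq_nonneg u) (sub_nonneg.2 hu)
  linarith [show (2 - u) ^ 2 * (1 + u) = 4 - u ^ 2 * (3 - u) by ring]

lemma sq_one_sub_mul_sq_add_two_le_four {ε : ℝ} (hε : ε ∈ Set.Icc (0 : ℝ) 1) :
    (1 - ε) ^ 2 * (1 + ε - ε ^ 2) * (ε + 2) ^ 2 ≤ 4 := by
  obtain ⟨h0, h1⟩ := hε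
  calc (1 - ε) ^ 2 * (1 + ε - ε ^ 2) * (ε + 2) ^ 2
      = (2 - (ε + ε ^ 2)) ^ 2 * (1 + ε - ε ^ 2) := by ring
    _ ≤ (2 - (ε + ε ^ 2)) ^ 2 * (1 + (ε + ε ^ 2)) := by gcongr; nlinarith
    _ ≤ 4 := sq_two_sub_mul_one_add_le_four (by nlinarith)

lemma div_one_add_le_four_mul_sq_div {ε : ℝ} (hε : ε ∈ Set.Icc (0 : ℝ) 1) :
    ε ^ 2 * (1 - ε) ^ 2 * (1 + ε - ε ^ 2) / (1 + ε) ≤ 4 * ε ^ 2 / (ε + 2) ^ 2 := by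
  obtain ⟨h0, h1⟩ := hε
  have hpoly := sq_one_sub_mul_sq_add_two_le_four ⟨h0, h1⟩
  have hnum : 0 ≤ ε ^ 2 * (1 - ε) ^ 2 * (1 + ε - ε ^ 2) := by
    have : 0 ≤ 1 + ε - ε ^ 2 := by nlinarith
    positivity
  calc ε ^ 2 * (1 - ε) ^ 2 * (1 + ε - ε ^ 2) / (1 + ε)
      ≤ ε ^ 2 * (1 - ε) ^ 2 * (1 + ε - ε ^ 2) := div_le_self hnum (by linarith)
    _ ≤ 4 * ε ^ 2 / (ε + 2) ^ 2 := by
      rw [le_div_iff₀ (by positivity)]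
      nlinarith [mul_le_mul_of_nonneg_left hpoly (sq_nonneg ε)]

/-- For every `ε ∈ (0,1)` and every `k₂ > 0` with `k₂(ε+2) − ε > 0`,
the function `f₁(k₂) = k₂²(k₂+1)ε/(k₂(ε+2) − ε)` satisfies
`f₁(k₂) ≥ ε²(1−ε)²(1+ε−ε²)/(1+ε) = ε²/f(ε)`. -/
theorem f1_lower_bound (ε : ℝ) (hε : ε ∈ Set.Ioo (0 : ℝ) 1) (k₂ : ℝ) (hk : 0 < k₂)
    (hden : 0 < k₂ * (ε + 2) - ε) :
    ε ^ 2 * (1 - ε) ^ 2 * (1 + ε - ε ^ 2) / (1 + ε) ≤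
        k₂ ^ 2 * (k₂ + 1) * ε / (k₂ * (ε + 2) - ε) ∧
      ε ^ 2 * (1 - ε) ^ 2 * (1 + ε - ε ^ 2) / (1 + ε) = ε ^ 2 / nuisance ε := by
  obtain ⟨h0, h1⟩ := hε
  refine ⟨?_, (sq_div_nuisance ε).symm⟩
  calc ε ^ 2 * (1 - ε) ^ 2 * (1 + ε - ε ^ 2) / (1 + ε)
      ≤ 4 * ε ^ 2 / (ε + 2) ^ 2 := div_one_add_le_four_mul_sq_div ⟨h0.le, h1.le⟩
    _ = ε * (4 * ε / (ε + 2) ^ 2) := by ring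
    _ ≤ ε * (k₂ ^ 2 / (k₂ * (ε + 2) - ε)) :=
      mul_le_mul_of_nonneg_left (four_mul_div_sq_le_sq_div (by linarith) hden) h0.le
    _ = k₂ ^ 2 * 1 * ε / (k₂ * (ε + 2) - ε) := by ring
    _ ≤ k₂ ^ 2 * (k₂ + 1) * ε / (k₂ * (ε + 2) - ε) := by gcongr; linarith
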